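/- Let E be a complex vector space with endomorphism d satisfying d^N = 0 (N ≥ 2), and let ℓ, m be positive integers with ℓ + m ≤ N. Then the sequence H^{(m)} → H^{(ℓ+m)} → H^{(ℓ)} is exact at H^{(ℓ+m)}, where the first map is induced by inclusion and the second is induced by d^m. -/
import Mathlib

/-- exactness of `H^(m) →[i^ℓ] H^(ℓ+m) →[d^m] H^(ℓ)` at `H^(ℓ+m)`,
stated at the level of representatives: for `y ∈ ker(d^(ℓ+m))`, the class of
`d^m y` vanishes in `H^(ℓ) = ker(d^ℓ)/im(d^(N-ℓ))` iff the class of `y` in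
`H^(ℓ+m)` comes from `H^(m)` via the inclusion-induced map. -/
theorem hexagon_exact_at_middle
    (E : Type*) [AddCommGroup E] [Module ℂ E]
    (d : E →ₗ[ℂ] E) (N : ℕ) (hN : 2 ≤ N) (hd : d ^ N = 0)
    (ℓ m : ℕ) (hℓ : 1 ≤ ℓ) (hm : 1 ≤ m) (hlm : ℓ + m ≤ N) :
    ∀ y ∈ LinearMap.ker (d ^ (ℓ + m)),
      ((d ^ m) y ∈ LinearMap.range (d ^ (N - ℓ)) ↔
        ∃ x ∈ LinearMap.ker (d ^ m),
          y - x ∈ LinearMap.range (d ^ (N - (ℓ + m)))) := by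
  intro y hy
  have hsplit : N - ℓ = m + (N - (ℓ + m)) := by omega
  constructor
  · rintro ⟨z, hz⟩
    refine ⟨y - (d ^ (N - (ℓ + m))) z, ?_, ⟨z, by abel⟩⟩
    have : (d ^ m) ((d ^ (N - (ℓ + m))) z) = (d ^ (N - ℓ)) z := by
      rw [hsplit, pow_add]; rfl
    simp [LinearMap.mem_ker, map_sub, this, hz]
  · rintro ⟨x, hx, z, hz⟩
    refine ⟨z, ?_⟩
    have hyx : y = x + (d ^ (N - (ℓ + m))) z := by
      have := hz; rw [eq_sub_iff_add_eq] at this; linear_combination (norm := abel) this.symm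
    rw [hsplit, pow_add]
    simp only [Module.End.mul_apply]
    rw [hyx, map_add, hx, zero_add]
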